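/- arXiv:1911.02117 — 5 statements merged into one kernel-verified Lean document; each statement's English description precedes it below -/
import Mathlib

section
/- Let ω = (ρ, θ, ρ̃, θ̃, ι). If there exist j, j' ∈ ℤ* and l, l' ∈ ℤ with ι(v_j^l) = w̃_{j'}^{l'}, then G(ω) equals the normal closure in G(ω) of the set {x, y, x̃, ỹ} (images under the canonical maps). -/
/-- `ℤ* = ℤ \ {0}`. -/
abbrev Zstar : Type := {n : ℤ // n ≠ 0}

/-- Index set for the free basis `S` (and `S̃`): `(j, l, b)` with `b = false` for `v_j^l`
and `b = true` for `w_j^l`. -/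
abbrev SIdx : Type := Zstar × ℤ × Bool

/-- The free group on three generators `x, y, z`. -/
abbrev F3 : Type := FreeGroup (Fin 3)

/-- The generator `x`. -/
def gx : F3 := FreeGroup.of 0
/-- The generator `y`. -/
def gy : F3 := FreeGroup.of 1
/-- The generator `z`. -/
def gz : F3 := FreeGroup.of 2

/-- `v_j^l = z^{-l} x^j y^{-ρ(j)} z^l`. -/
def vgen (ρ : Equiv.Perm Zstar) (j : Zstar) (l : ℤ) : F3 :=
  gz ^ (-l) * gx ^ j.val * gy ^ (-(ρ j).val) * gz ^ l

/-- `w_j^l = z^{-l} x^j z y^{-θ(j)} z^l`. -/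
def wgen (θ : Equiv.Perm Zstar) (j : Zstar) (l : ℤ) : F3 :=
  gz ^ (-l) * gx ^ j.val * gz * gy ^ (-(θ j).val) * gz ^ l

/-- The element of `S` indexed by `(j, l, b)`. -/
def sElem (ρ θ : Equiv.Perm Zstar) (p : SIdx) : F3 :=
  if p.2.2 then wgen θ p.1 p.2.1 else vgen ρ p.1 p.2.1

/-- The canonical homomorphism from the free group on the index set of `S` to `F`,
sending `(j,l,false) ↦ v_j^l` and `(j,l,true) ↦ w_j^l`. -/
def sMap (ρ θ : Equiv.Perm Zstar) : FreeGroup SIdx →* F3 :=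
  FreeGroup.lift (sElem ρ θ)

/-- `H = ⟨S⟩ ≤ F`. -/
def Hsub (ρ θ : Equiv.Perm Zstar) : Subgroup F3 :=
  Subgroup.closure (Set.range (sElem ρ θ))

/-- The tuple `ω = (ρ, θ, ρ̃, θ̃, ι)`; the bijection `ι : S → S̃` is recorded as a bijection
of the index sets. -/
structure OmegaTuple : Type where
  ρ : Equiv.Perm Zstar
  θ : Equiv.Perm Zstar
  ρt : Equiv.Perm Zstar
  θt : Equiv.Perm Zstar
  ι : SIdx ≃ SIdx

/-- The two maps from the abstract copy of `H` (the free group on the index set of `S`)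
into the two copies of `F₃`: into `F` via `S`, and into `F̃` via `ι` followed by `S̃`. -/
def pushMaps (ω : OmegaTuple) : Bool → (FreeGroup SIdx →* F3) :=
  fun b => if b then (sMap ω.ρt ω.θt).comp (FreeGroup.map ω.ι) else sMap ω.ρ ω.θ

/-- `G(ω) = F *_{H = H̃} F̃`, the amalgamated product. -/
def GroupOmega (ω : OmegaTuple) : Type := Monoid.PushoutI (pushMaps ω)

instance (ω : OmegaTuple) : Group (GroupOmega ω) := by
  delta GroupOmega; infer_instance

/-- The canonical map `F → G(ω)`. -/
def ofb (ω : OmegaTuple) : F3 →* GroupOmega ω := Monoid.PushoutI.of (φ := pushMaps ω) false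

/-- The canonical map `F̃ → G(ω)`. -/
def oft (ω : OmegaTuple) : F3 →* GroupOmega ω := Monoid.PushoutI.of (φ := pushMaps ω) true

/-- `c_{l,j} = z^l x^j`. -/
def cElem (l j : ℤ) : F3 := gz ^ l * gx ^ j

/-- `d_{M,M'}^l = v_M^l (v_{M'}^l)⁻¹`. -/
def dElem (ρ : Equiv.Perm Zstar) (M M' : Zstar) (l : ℤ) : F3 :=
  vgen ρ M l * (vgen ρ M' l)⁻¹

/-- The index `(j,l,b)` corresponds to an element of `S_N` (resp. `S̃_N`):
`j ∈ [-N,N] ∩ ℤ*` and `l ∈ [-N,N]`. -/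
def InSN (N : ℤ) (p : SIdx) : Prop :=
  p.1.val ∈ Set.Icc (-N) N ∧ p.2.1 ∈ Set.Icc (-N) N

/-- A (total) map `g` extends a partial bijection `f`. -/
def Extends {α β : Type*} (g : α → β) (f : PartialEquiv α β) : Prop :=
  ∀ a ∈ f.source, g a = f a

/-- A partial bijection of `ℤ*` is independent from `[-N, N]`: its domain and image
are disjoint from `[-N, N]`. -/
def IndepFromIcc (f : PartialEquiv Zstar Zstar) (N : ℤ) : Prop :=
  (∀ a ∈ f.source, a.val ∉ Set.Icc (-N) N) ∧ (∀ a ∈ f.target, a.val ∉ Set.Icc (-N) N)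

/-- A partial bijection of the index set is independent from `(S_N, S̃_N)`:
its domain misses `S_N` and its image misses `S̃_N`. -/
def IndepFromSN (f : PartialEquiv SIdx SIdx) (N : ℤ) : Prop :=
  (∀ p ∈ f.source, ¬ InSN N p) ∧ (∀ p ∈ f.target, ¬ InSN N p)


lemma push_rel (ω : OmegaTuple) (p : SIdx) :
    ofb ω (sElem ω.ρ ω.θ p) = oft ω (sElem ω.ρt ω.θt (ω.ι p)) := by
  have h1 : sElem ω.ρ ω.θ p = pushMaps ω false (FreeGroup.of p) := by
    simp [pushMaps, sMap]
  have h2 : sElem ω.ρt ω.θt (ω.ι p) = pushMaps ω true (FreeGroup.of p) := by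
    simp [pushMaps, sMap]
  rw [h1, h2]
  exact (Monoid.PushoutI.of_apply_eq_base (pushMaps ω) false _).trans
    (Monoid.PushoutI.of_apply_eq_base (pushMaps ω) true _).symm

/-- if `ι` sends some `v_j^l` to some `w̃_{j'}^{l'}`, then `G(ω)` is the
normal closure of `{x, y, x̃, ỹ}`. -/
theorem stmt3 (ω : OmegaTuple) (j j' : Zstar) (l l' : ℤ)
    (h : ω.ι (j, l, false) = (j', l', true)) :
    Subgroup.normalClosure
        ({ofb ω gx, ofb ω gy, oft ω gx, oft ω gy} : Set (GroupOmega ω)) = ⊤ := by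
  set N := Subgroup.normalClosure
      ({ofb ω gx, ofb ω gy, oft ω gx, oft ω gy} : Set (GroupOmega ω)) with hNdef
  haveI : N.Normal := Subgroup.normalClosure_normal
  have hgen : ∀ g ∈ ({ofb ω gx, ofb ω gy, oft ω gx, oft ω gy} : Set (GroupOmega ω)), g ∈ N :=
    fun g hg => Subgroup.subset_normalClosure hg
  let π : GroupOmega ω →* GroupOmega ω ⧸ N := QuotientGroup.mk' N
  have hmem : ∀ g : GroupOmega ω, π g = 1 ↔ g ∈ N := fun g => by
    simpa [π] using QuotientGroup.eq_one_iff (N := N) g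
  have hx : π (ofb ω gx) = 1 := (hmem _).2 (hgen _ (by simp))
  have hy : π (ofb ω gy) = 1 := (hmem _).2 (hgen _ (by simp))
  have hxt : π (oft ω gx) = 1 := (hmem _).2 (hgen _ (by simp))
  have hyt : π (oft ω gy) = 1 := (hmem _).2 (hgen _ (by simp))
  -- first relation: kills z-tilde
  have rel1 := push_rel ω (j, l, false)
  rw [h] at rel1
  have hzt : π (oft ω gz) = 1 := by
    have h1 := congrArg π rel1
    simp only [sElem, vgen, wgen, Bool.false_eq_true, if_false, if_true,
      map_mul, map_zpow, hx, hy, hxt, hyt, one_zpow, one_mul, mul_one] at h1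
    group at h1
    exact h1.symm
  -- second relation: kills z
  have rel2 := push_rel ω (j, l, true)
  have hz : π (ofb ω gz) = 1 := by
    have h2 := congrArg π rel2
    by_cases hb : (ω.ι (j, l, true)).2.2 <;>
      · simp only [sElem, hb, vgen, wgen, Bool.false_eq_true, if_false, if_true,
          map_mul, map_zpow, hx, hy, hxt, hyt, hzt, one_zpow, one_mul, mul_one] at h2
        group at h2
        simpa using h2
  -- the quotient is trivial, hence N = ⊤
  have hπ : ∀ g : GroupOmega ω, π g = 1 := by
    suffices hone : π = 1 by intro g; rw [hone]; rfl
    apply Monoid.PushoutI.hom_ext_nonempty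
    intro i
    apply FreeGroup.ext_hom
    intro k
    fin_cases k <;> cases i <;>
      first | exact hx | exact hy | exact hz | exact hxt | exact hyt | exact hzt
  rw [eq_top_iff]
  exact fun g _ => (hmem g).1 (hπ g)
end

section
/- The group homomorphism from the free group on the set ℤ* × ℤ × {0,1} to F sending the generator (j, l, 0) to v_j^l and the generator (j, l, 1) to w_j^l is injective, and its image is H; that is, S = {v_j^l, w_j^l : j ∈ ℤ*, l ∈ ℤ} is a free basis of H. Likewise S̃ is a free basis of H̃ in F̃. -/
/-!
Ping-pong in `F` acting on itself. With `m = ρ j` for `v` and `m = θ j` for `w`, the generator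
indexed by `(j, l, b)` factors as `(z^{-l} x^j) t (z^{-l} y^m)⁻¹`, where `t = 1` for `v_j^l` and
`t = z` for `w_j^l`. Let `X` be the reduced words `z^{-l} x^j u` and `Y` the reduced words
`z^{-l} y^m u'`. For `v`, the first letter of `u` is `y^{±1}` or `z^{-1}` and the first letter of
`u'` is `x^{±1}` or `z` (each may also be empty). For `w`, `u` begins with `z` and `u'` with
`z^{-1}`. Reading off the initial `z`-run and then the `x`- or `y`-run of a reduced word shows
that all these sets are pairwise disjoint. Multiplying by `t` sends a word not allowed after
`y^m` to one allowed after `x^j`, so the generator maps the complement of its `Y` into its `X`,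
and its inverse maps the complement of its `X` into its `Y`.
-/

namespace FreeGroup

variable {α : Type*} [DecidableEq α]

theorem toWord_mk_singleton_mul {x : α × Bool} {g : FreeGroup α}
    (hg : g.toWord.head? ≠ some (x.1, !x.2)) : (mk [x] * g).toWord = x :: g.toWord := by
  have hred : IsReduced (x :: g.toWord) := by
    refine List.isChain_cons.mpr ⟨fun c hc hx => ?_, isReduced_toWord⟩
    by_contra hne
    refine hg (hc.trans (congrArg some (Prod.ext hx.symm ?_)))
    revert hne; cases x.2 <;> cases c.2 <;> simp
  rw [toWord_mul, toWord_mk, reduce_singleton, List.singleton_append, hred.reduce_eq]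

theorem head?_toWord_mk_singleton_pow_mul {x : α × Bool} {g : FreeGroup α}
    (hg : g.toWord.head? ≠ some (x.1, !x.2)) (n : ℕ) :
    (mk [x] ^ (n + 1) * g).toWord.head? = some x := by
  induction n with
  | zero => rw [zero_add, pow_one, toWord_mk_singleton_mul hg, List.head?_cons]
  | succ n ih =>
    rw [pow_succ', mul_assoc, toWord_mk_singleton_mul (by rw [ih]; simp [Prod.ext_iff]),
      List.head?_cons]

theorem head?_toWord_of_zpow_mul {a : α} {n : ℤ} {g : FreeGroup α} (hn : n ≠ 0)
    (hg : ∀ c ∈ g.toWord.head?, c.1 ≠ a) :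
    (of a ^ n * g).toWord.head? = some (a, decide (0 < n)) := by
  have hg' (b : Bool) : g.toWord.head? ≠ some (a, b) := fun h => hg _ h rfl
  obtain ⟨m, rfl | rfl⟩ := n.eq_nat_or_neg
  · obtain ⟨m, rfl⟩ := Nat.exists_eq_succ_of_ne_zero (by omega : m ≠ 0)
    rw [zpow_natCast, decide_eq_true (by omega)]
    exact head?_toWord_mk_singleton_pow_mul (hg' _) m
  · obtain ⟨m, rfl⟩ := Nat.exists_eq_succ_of_ne_zero (by omega : m ≠ 0)
    have hinv : (of a)⁻¹ = mk [(a, false)] := by rw [of, inv_mk]; rfl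
    rw [zpow_neg, zpow_natCast, ← inv_pow, hinv, decide_eq_false (by omega)]
    exact head?_toWord_mk_singleton_pow_mul (hg' _) m

theorem of_zpow_mul_inj {a : α} {m n : ℤ} {g h : FreeGroup α}
    (hg : ∀ c ∈ g.toWord.head?, c.1 ≠ a) (hh : ∀ c ∈ h.toWord.head?, c.1 ≠ a)
    (e : of a ^ m * g = of a ^ n * h) : m = n ∧ g = h := by
  obtain rfl : m = n := by
    by_contra hmn
    have hgh : g = of a ^ (n - m) * h := by
      rw [eq_inv_mul_of_mul_eq e, ← mul_assoc, ← zpow_neg, ← zpow_add, neg_add_eq_sub]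
    have := head?_toWord_of_zpow_mul (sub_ne_zero.mpr (Ne.symm hmn)) hh
    exact hg _ (hgh ▸ this) rfl
  exact ⟨rfl, mul_left_cancel e⟩

theorem of_zpow_mul_of_zpow_mul_inj {a b b' : α} (hb : b ≠ a) (hb' : b' ≠ a) {l l' n n' : ℤ}
    (hn : n ≠ 0) (hn' : n' ≠ 0) {g g' : FreeGroup α} (hg : ∀ c ∈ g.toWord.head?, c.1 ≠ b)
    (hg' : ∀ c ∈ g'.toWord.head?, c.1 ≠ b')
    (e : of a ^ l * (of b ^ n * g) = of a ^ l' * (of b' ^ n' * g')) :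
    l = l' ∧ b = b' ∧ n = n' ∧ g = g' := by
  have hhead := head?_toWord_of_zpow_mul hn hg
  have hhead' := head?_toWord_of_zpow_mul hn' hg'
  obtain ⟨rfl, e'⟩ := of_zpow_mul_inj (by simpa [hhead] using hb) (by simpa [hhead'] using hb') e
  obtain rfl : b = b' := by
    rw [e', hhead'] at hhead
    simp only [Option.some.injEq, Prod.mk.injEq] at hhead
    exact hhead.1.symm
  exact ⟨rfl, rfl, of_zpow_mul_inj hg hg' e'⟩

end FreeGroup

open FreeGroup Pointwise

theorem Set.smul_compl_smul_subset {G : Type*} [Group G] {a p q t : G} {C D : Set G}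
    (ha : a = p * t * q⁻¹) (h : t • Dᶜ ⊆ C) : a • (q • D)ᶜ ⊆ p • C := by
  rw [← Set.smul_set_compl, smul_smul, ha, inv_mul_cancel_right, mul_smul]
  exact Set.smul_set_mono h

def xPrefix (p : SIdx) : F3 := gz ^ (-p.2.1) * gx ^ p.1.val

def yExp (ρ θ : Equiv.Perm Zstar) (p : SIdx) : ℤ := (if p.2.2 then θ p.1 else ρ p.1).val

def yPrefix (ρ θ : Equiv.Perm Zstar) (p : SIdx) : F3 := gz ^ (-p.2.1) * gy ^ yExp ρ θ p

def twist (b : Bool) : F3 := if b then gz else 1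

def xTail : Bool → Set F3
  | false => {g | ∀ c ∈ g.toWord.head?, c.1 ≠ 0 ∧ c ≠ (2, true)}
  | true => {g | g.toWord.head? = some (2, true)}

def yTail : Bool → Set F3
  | false => {g | ∀ c ∈ g.toWord.head?, c.1 ≠ 1 ∧ c ≠ (2, false)}
  | true => {g | g.toWord.head? = some (2, false)}

def pingX (p : SIdx) : Set F3 := xPrefix p • xTail p.2.2

def pingY (ρ θ : Equiv.Perm Zstar) (p : SIdx) : Set F3 := yPrefix ρ θ p • yTail p.2.2

theorem sElem_eq (ρ θ : Equiv.Perm Zstar) (p : SIdx) :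
    sElem ρ θ p = xPrefix p * twist p.2.2 * (yPrefix ρ θ p)⁻¹ := by
  obtain ⟨j, l, _ | _⟩ := p <;>
    simp [sElem, vgen, wgen, xPrefix, yPrefix, yExp, twist, mul_assoc]

theorem yExp_ne_zero (ρ θ : Equiv.Perm Zstar) (p : SIdx) : yExp ρ θ p ≠ 0 := by
  unfold yExp; split
  exacts [(θ p.1).2, (ρ p.1).2]

theorem xTail_head (b : Bool) {g : F3} (hg : g ∈ xTail b) : ∀ c ∈ g.toWord.head?, c.1 ≠ 0 := by
  cases b
  · exact fun c hc => (hg c hc).1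
  · intro c hc; rw [show g.toWord.head? = _ from hg] at hc; cases hc; decide

theorem yTail_head (b : Bool) {g : F3} (hg : g ∈ yTail b) : ∀ c ∈ g.toWord.head?, c.1 ≠ 1 := by
  cases b
  · exact fun c hc => (hg c hc).1
  · intro c hc; rw [show g.toWord.head? = _ from hg] at hc; cases hc; decide

theorem eq_of_mem_xTail {b b' : Bool} {g : F3} (h : g ∈ xTail b) (h' : g ∈ xTail b') :
    b = b' := by
  have key {g : F3} (hf : g ∈ xTail false) (ht : g ∈ xTail true) : False := (hf _ ht).2 rfl
  cases b <;> cases b'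
  · rfl
  · exact (key h h').elim
  · exact (key h' h).elim
  · rfl

theorem eq_of_mem_yTail {b b' : Bool} {g : F3} (h : g ∈ yTail b) (h' : g ∈ yTail b') :
    b = b' := by
  have key {g : F3} (hf : g ∈ yTail false) (ht : g ∈ yTail true) : False := (hf _ ht).2 rfl
  cases b <;> cases b'
  · rfl
  · exact (key h h').elim
  · exact (key h' h).elim
  · rfl

theorem xTail_nonempty (b : Bool) : (xTail b).Nonempty := by
  cases b
  · exact ⟨1, by simp [xTail]⟩
  · exact ⟨gz, by simp [xTail, gz]⟩

theorem eq_of_mem_pingX {p p' : SIdx} {g : F3} (h : g ∈ pingX p) (h' : g ∈ pingX p') :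
    p = p' := by
  obtain ⟨c, hc, rfl⟩ := h
  obtain ⟨c', hc', e⟩ := h'
  simp only [xPrefix, smul_eq_mul, mul_assoc] at e
  obtain ⟨hl, -, hj, rfl⟩ := of_zpow_mul_of_zpow_mul_inj (by decide) (by decide) p.1.2 p'.1.2
    (xTail_head _ hc) (xTail_head _ hc') e.symm
  exact Prod.ext (Subtype.ext hj) (Prod.ext (neg_inj.mp hl) (eq_of_mem_xTail hc hc'))

theorem eq_of_mem_pingY {ρ θ : Equiv.Perm Zstar} {p p' : SIdx} {g : F3} (h : g ∈ pingY ρ θ p)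
    (h' : g ∈ pingY ρ θ p') : p = p' := by
  obtain ⟨d, hd, rfl⟩ := h
  obtain ⟨d', hd', e⟩ := h'
  simp only [yPrefix, smul_eq_mul, mul_assoc] at e
  obtain ⟨hl, -, hm, rfl⟩ := of_zpow_mul_of_zpow_mul_inj (by decide) (by decide)
    (yExp_ne_zero ρ θ p) (yExp_ne_zero ρ θ p') (yTail_head _ hd) (yTail_head _ hd') e.symm
  obtain ⟨j, l, b⟩ := p
  obtain ⟨j', l', b'⟩ := p'
  obtain rfl : b = b' := eq_of_mem_yTail hd hd'
  have hj : j = j' := by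
    cases b
    · exact ρ.injective (Subtype.ext hm)
    · exact θ.injective (Subtype.ext hm)
  rw [hj, show l = l' from neg_inj.mp hl]

theorem not_mem_pingX_of_mem_pingY {ρ θ : Equiv.Perm Zstar} {p p' : SIdx} {g : F3}
    (h : g ∈ pingX p) (h' : g ∈ pingY ρ θ p') : False := by
  obtain ⟨c, hc, rfl⟩ := h
  obtain ⟨d, hd, e⟩ := h'
  simp only [xPrefix, yPrefix, smul_eq_mul, mul_assoc] at e
  obtain ⟨-, hxy, -⟩ := of_zpow_mul_of_zpow_mul_inj (by decide) (by decide)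
    (yExp_ne_zero ρ θ p') p.1.2 (yTail_head _ hd) (xTail_head _ hc) e
  exact absurd hxy (by decide)

theorem twist_smul_compl_yTail (b : Bool) : twist b • (yTail b)ᶜ ⊆ xTail b := by
  cases b
  · rw [twist, if_neg Bool.false_ne_true, one_smul]
    intro g (hg : ¬ ∀ c ∈ g.toWord.head?, _) c hc
    have key : ∀ c : Fin 3 × Bool, ¬(c.1 ≠ 0 ∧ c ≠ (2, true)) → c.1 ≠ 1 ∧ c ≠ (2, false) := by
      decide
    by_contra hq
    exact hg fun c' hc' => Option.mem_unique hc hc' ▸ key c hq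
  · rintro _ ⟨g, hg, rfl⟩
    change (mk [(2, true)] * g).toWord.head? = _
    rw [toWord_mk_singleton_mul (x := (2, true)) hg, List.head?_cons]

theorem inv_twist_smul_compl_xTail (b : Bool) : (twist b)⁻¹ • (xTail b)ᶜ ⊆ yTail b := by
  cases b
  · rw [twist, if_neg Bool.false_ne_true, inv_one, one_smul]
    intro g (hg : ¬ ∀ c ∈ g.toWord.head?, _) c hc
    have key : ∀ c : Fin 3 × Bool, ¬(c.1 ≠ 1 ∧ c ≠ (2, false)) → c.1 ≠ 0 ∧ c ≠ (2, true) := by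
      decide
    by_contra hq
    exact hg fun c' hc' => Option.mem_unique hc hc' ▸ key c hq
  · rintro _ ⟨g, hg, rfl⟩
    have hinv : (twist true)⁻¹ = mk [(2, false)] := by
      rw [twist, if_pos rfl, gz, of, inv_mk]; rfl
    change ((twist true)⁻¹ * g).toWord.head? = _
    rw [hinv, toWord_mk_singleton_mul (x := (2, false)) hg, List.head?_cons]

/-- the homomorphism from the free group on the index set `ℤ* × ℤ × {0,1}`
sending `(j,l,0) ↦ v_j^l` and `(j,l,1) ↦ w_j^l` is injective with image `H`; i.e. `S` is a
free basis of `H`.  (The statement for `S̃` and `H̃` is the same statement, for the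
permutations `ρ̃, θ̃`.) -/
theorem stmt4 (ρ θ : Equiv.Perm Zstar) :
    Function.Injective (sMap ρ θ) ∧ (sMap ρ θ).range = Hsub ρ θ := by
  have : Nonempty Zstar := ⟨⟨1, one_ne_zero⟩⟩
  have hinv (p : SIdx) : (sElem ρ θ)⁻¹ p = yPrefix ρ θ p * (twist p.2.2)⁻¹ * (xPrefix p)⁻¹ := by
    rw [Pi.inv_apply, sElem_eq]; group
  refine ⟨injective_lift_of_ping_pong (sElem ρ θ) pingX (pingY ρ θ)
    (fun _ => (xTail_nonempty _).smul_set)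
    (fun _ _ hne => Set.disjoint_left.mpr fun _ h h' => hne (eq_of_mem_pingX h h'))
    (fun _ _ hne => Set.disjoint_left.mpr fun _ h h' => hne (eq_of_mem_pingY h h'))
    (fun _ _ => Set.disjoint_left.mpr fun _ h h' => not_mem_pingX_of_mem_pingY h h')
    (fun p => Set.smul_compl_smul_subset (sElem_eq ρ θ p) (twist_smul_compl_yTail _))
    (fun p => Set.smul_compl_smul_subset (hinv p) (inv_twist_smul_compl_xTail _)),
    range_lift_eq_closure⟩
end

section
/- The map (l, j) ↦ H·(z^l x^j) is a bijection from ℤ² onto the set of right cosets of H in F; that is, {c_{l,j} : (l, j) ∈ ℤ²} is a system of representatives of the right cosets of H in F. Likewise {c̃_{l,j} : (l, j) ∈ ℤ²} is a system of representatives of the right cosets of H̃ in F̃. In particular H has infinite index in F. -/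
/-!
Let `ρ̂, θ̂` extend `ρ, θ` to `ℤ` by `0 ↦ 0`, and let `F` act on `ℤ²` on the right by
`x : (l, j) ↦ (l, j + 1)`, `y : (l, j) ↦ (l, ρ̂⁻¹ (ρ̂ j + 1))`, and `z : (l, 0) ↦ (l + 1, 0)`,
`(l, j) ↦ (l, ρ̂⁻¹ (θ̂ j))` for `j ≠ 0`. Every `v_j^l` and `w_j^l` fixes `(0, 0)`, while
`(0, 0) · z^l x^j = (l, j)`; hence the cosets `H z^l x^j` are pairwise distinct. Conversely,
`v_j^{-l}, w_j^{-l} ∈ H` say that `H z^l x^j = H z^l y^{ρ̂ j}` and, for `j ≠ 0`,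
`H z^l x^j z = H z^l y^{θ̂ j}`; so right multiplication by a generator sends the coset of `c_p`
to the coset of `c_{p · s}`, and every coset is of the form `H c_p`.
-/

namespace Subgroup

variable {G X : Type*} [Group G] (H : Subgroup G) (φ : G →* Equiv.Perm X) (c : X → G)

theorem mul_mul_inv_mem_of_closure_eq_top {S : Set G} (hS : closure S = ⊤)
    (hstep : ∀ s ∈ S, ∀ x, c x * s * (c (φ s⁻¹ x))⁻¹ ∈ H) (g : G) (x : X) :
    c x * g * (c (φ g⁻¹ x))⁻¹ ∈ H := by
  have hg : g ∈ closure S := hS ▸ mem_top g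
  induction hg using closure_induction generalizing x with
  | mem s hs => exact hstep s hs x
  | one => simp
  | mul g₁ g₂ _ _ h₁ h₂ =>
    simpa [mul_assoc] using mul_mem (h₁ x) (h₂ (φ g₁⁻¹ x))
  | inv g _ h =>
    simpa [mul_assoc] using inv_mem (h (φ g x))

theorem bijective_rightRel_mk_of_action {S : Set G} (hS : closure S = ⊤) (x₀ : X)
    (hH : ∀ h ∈ H, φ h x₀ = x₀) (hc : ∀ x, φ (c x)⁻¹ x₀ = x) (hc₀ : c x₀ ∈ H)
    (hstep : ∀ s ∈ S, ∀ x, c x * s * (c (φ s⁻¹ x))⁻¹ ∈ H) :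
    Function.Bijective fun x => Quotient.mk (QuotientGroup.rightRel H) (c x) := by
  constructor
  · intro x y hxy
    have hxy : c x * (c y)⁻¹ ∈ H := by
      simpa using inv_mem (QuotientGroup.rightRel_apply.mp (Quotient.exact hxy))
    calc x = φ (c x)⁻¹ (φ (c x * (c y)⁻¹) x₀) := by rw [hH _ hxy, hc]
      _ = y := by rw [← Equiv.Perm.mul_apply, ← map_mul, inv_mul_cancel_left, hc]
  · intro q
    induction q using Quotient.inductionOn with | h g => ?_
    refine ⟨φ g⁻¹ x₀, Quotient.sound (QuotientGroup.rightRel_apply.mpr ?_)⟩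
    simpa [mul_assoc] using
      mul_mem (inv_mem hc₀) (mul_mul_inv_mem_of_closure_eq_top H φ c hS hstep g x₀)

end Subgroup

open Equiv Equiv.Perm

lemma closure_gx_gy_gz_eq_top : Subgroup.closure ({gx, gy, gz} : Set F3) = ⊤ := by
  rw [← FreeGroup.closure_range_of]
  congr
  ext g
  simp [Fin.exists_fin_succ, gx, gy, gz, eq_comm]

lemma ofSubtype_zero (ρ : Perm Zstar) : ofSubtype ρ 0 = 0 :=
  ofSubtype_apply_of_not_mem ρ (not_not.2 rfl)

lemma ofSubtype_inv_apply_coe (ρ : Perm Zstar) (j : Zstar) : (ofSubtype ρ)⁻¹ (ρ j) = j := by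
  rw [inv_eq_iff_eq, ofSubtype_apply_coe]

def xMove : Perm (ℤ × ℤ) := Equiv.addRight (0, 1)

def yMove (ρ : Perm Zstar) : Perm (ℤ × ℤ) :=
  MulAut.conj (prodCongr (Equiv.refl ℤ) (ofSubtype ρ))⁻¹ xMove

def zMove (ρ θ : Perm Zstar) : Perm (ℤ × ℤ) :=
  prodCongr (Equiv.refl ℤ) (ofSubtype (ρ⁻¹ * θ)) *
    prodCongrLeft fun j => if j = 0 then Equiv.addRight 1 else Equiv.refl ℤ

lemma xMove_zpow_apply (m : ℤ) (p : ℤ × ℤ) : (xMove ^ m) p = (p.1, p.2 + m) := by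
  simp [xMove, zsmul_addRight, Prod.ext_iff]

lemma xMove_apply (l j : ℤ) : xMove (l, j) = (l, j + 1) := by
  simpa using xMove_zpow_apply 1 (l, j)

lemma yMove_zpow_apply (ρ : Perm Zstar) (m l j : ℤ) :
    (yMove ρ ^ m) (l, j) = (l, (ofSubtype ρ)⁻¹ (ofSubtype ρ j + m)) := by
  rw [yMove, ← map_zpow, MulAut.conj_apply]
  simp [xMove_zpow_apply]

lemma yMove_apply (ρ : Perm Zstar) (l j : ℤ) :
    yMove ρ (l, j) = (l, (ofSubtype ρ)⁻¹ (ofSubtype ρ j + 1)) := by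
  simpa using yMove_zpow_apply ρ 1 l j

lemma zMove_apply_zero (ρ θ : Perm Zstar) (l : ℤ) : zMove ρ θ (l, 0) = (l + 1, 0) := by
  rw [zMove, mul_apply, prodCongrLeft_apply, if_pos rfl, prodCongr_apply, Prod.map_apply,
    ofSubtype_zero]
  rfl

lemma zMove_apply_of_ne_zero (ρ θ : Perm Zstar) (l : ℤ) {j : ℤ} (hj : j ≠ 0) :
    zMove ρ θ (l, j) = (l, (ofSubtype ρ)⁻¹ (ofSubtype θ j)) := by
  simp [zMove, hj]

lemma zMove_zpow_apply_zero (ρ θ : Perm Zstar) (m l : ℤ) :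
    (zMove ρ θ ^ m) (l, 0) = (l + m, 0) := by
  induction m using Int.induction_on generalizing l with
  | zero => simp
  | succ k ih =>
    rw [zpow_add_one, mul_apply, zMove_apply_zero, ih]
    ring_nf
  | pred k ih =>
    have h : (zMove ρ θ)⁻¹ (l, 0) = (l - 1, 0) := by
      rw [inv_eq_iff_eq, zMove_apply_zero, sub_add_cancel]
    rw [zpow_sub_one, mul_apply, h, ih]
    ring_nf

/-- The right action `p ↦ p · s` of the header as a left action: `s` acts by the inverse
of its move. -/
def cosetAction (ρ θ : Perm Zstar) : F3 →* Perm (ℤ × ℤ) :=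
  FreeGroup.lift ![xMove⁻¹, (yMove ρ)⁻¹, (zMove ρ θ)⁻¹]

section cosetAction

variable (ρ θ : Perm Zstar)

lemma cosetAction_gx : cosetAction ρ θ gx = xMove⁻¹ := FreeGroup.lift_apply_of
lemma cosetAction_gy : cosetAction ρ θ gy = (yMove ρ)⁻¹ := FreeGroup.lift_apply_of
lemma cosetAction_gz : cosetAction ρ θ gz = (zMove ρ θ)⁻¹ := FreeGroup.lift_apply_of

lemma cosetAction_cElem_inv (l j : ℤ) : cosetAction ρ θ (cElem l j)⁻¹ (0, 0) = (l, j) := by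
  simp [cElem, cosetAction_gx, cosetAction_gz, inv_zpow', zMove_zpow_apply_zero,
    xMove_zpow_apply]

lemma cosetAction_vgen (j : Zstar) (l : ℤ) : cosetAction ρ θ (vgen ρ j l) (0, 0) = (0, 0) := by
  simp only [vgen, map_mul, map_zpow, cosetAction_gx, cosetAction_gy, cosetAction_gz, inv_zpow',
    neg_neg, mul_apply, zMove_zpow_apply_zero, yMove_zpow_apply, ofSubtype_zero, zero_add,
    ofSubtype_inv_apply_coe, xMove_zpow_apply, add_neg_cancel, neg_add_cancel]

lemma cosetAction_wgen (j : Zstar) (l : ℤ) : cosetAction ρ θ (wgen θ j l) (0, 0) = (0, 0) := by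
  have h : (zMove ρ θ)⁻¹ (-l, (ofSubtype ρ)⁻¹ (θ j)) = (-l, (j : ℤ)) := by
    rw [inv_eq_iff_eq, zMove_apply_of_ne_zero _ _ _ j.2, ofSubtype_apply_coe]
  simp only [wgen, map_mul, map_zpow, cosetAction_gx, cosetAction_gy, cosetAction_gz, inv_zpow',
    neg_neg, mul_apply, zMove_zpow_apply_zero, yMove_zpow_apply, ofSubtype_zero,
    zero_add, h, xMove_zpow_apply, add_neg_cancel, neg_add_cancel]

lemma cosetAction_apply_zero_of_mem {h : F3} (hh : h ∈ Hsub ρ θ) :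
    cosetAction ρ θ h (0, 0) = (0, 0) := by
  have hle : Hsub ρ θ ≤
      (MulAction.stabilizer (Perm (ℤ × ℤ)) ((0 : ℤ), (0 : ℤ))).comap (cosetAction ρ θ) := by
    refine (Subgroup.closure_le _).2 ?_
    rintro _ ⟨⟨j, l, _ | _⟩, rfl⟩
    exacts [cosetAction_vgen ρ θ j l, cosetAction_wgen ρ θ j l]
  exact hle hh

end cosetAction

section Hsub

variable (ρ θ : Perm Zstar)

lemma zxyz_mem_Hsub (l j : ℤ) :
    gz ^ l * gx ^ j * gy ^ (-ofSubtype ρ j) * gz ^ (-l) ∈ Hsub ρ θ := by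
  rcases eq_or_ne j 0 with rfl | hj
  · simp [ofSubtype_zero]
  · have : sElem ρ θ (⟨j, hj⟩, -l, false) =
        gz ^ l * gx ^ j * gy ^ (-ofSubtype ρ j) * gz ^ (-l) := by
      simp [sElem, vgen, ofSubtype_apply_of_mem ρ hj]
    exact this ▸ Subgroup.subset_closure ⟨_, rfl⟩

lemma zxzyz_mem_Hsub (l : ℤ) {j : ℤ} (hj : j ≠ 0) :
    gz ^ l * gx ^ j * gz * gy ^ (-ofSubtype θ j) * gz ^ (-l) ∈ Hsub ρ θ := by
  have : sElem ρ θ (⟨j, hj⟩, -l, true) =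
      gz ^ l * gx ^ j * gz * gy ^ (-ofSubtype θ j) * gz ^ (-l) := by
    simp [sElem, wgen, ofSubtype_apply_of_mem θ hj]
  exact this ▸ Subgroup.subset_closure ⟨_, rfl⟩

lemma cElem_mul_gy_mul_inv_mem (l j : ℤ) :
    cElem l j * gy * (cElem l ((ofSubtype ρ)⁻¹ (ofSubtype ρ j + 1)))⁻¹ ∈ Hsub ρ θ := by
  set j' := (ofSubtype ρ)⁻¹ (ofSubtype ρ j + 1)
  have hj' : ofSubtype ρ j' = ofSubtype ρ j + 1 := Equiv.apply_symm_apply _ _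
  have key : cElem l j * gy * (cElem l j')⁻¹ =
      (gz ^ l * gx ^ j * gy ^ (-ofSubtype ρ j) * gz ^ (-l)) *
        (gz ^ l * gx ^ j' * gy ^ (-ofSubtype ρ j') * gz ^ (-l))⁻¹ := by
    rw [cElem, cElem, hj']
    group
  rw [key]
  exact mul_mem (zxyz_mem_Hsub ρ θ l j) (inv_mem (zxyz_mem_Hsub ρ θ l j'))

lemma cElem_mul_gz_mul_inv_mem (l : ℤ) {j : ℤ} (hj : j ≠ 0) :
    cElem l j * gz * (cElem l ((ofSubtype ρ)⁻¹ (ofSubtype θ j)))⁻¹ ∈ Hsub ρ θ := by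
  set j' := (ofSubtype ρ)⁻¹ (ofSubtype θ j)
  have hj' : ofSubtype ρ j' = ofSubtype θ j := Equiv.apply_symm_apply _ _
  have key : cElem l j * gz * (cElem l j')⁻¹ =
      (gz ^ l * gx ^ j * gz * gy ^ (-ofSubtype θ j) * gz ^ (-l)) *
        (gz ^ l * gx ^ j' * gy ^ (-ofSubtype ρ j') * gz ^ (-l))⁻¹ := by
    rw [cElem, cElem, hj']
    group
  rw [key]
  exact mul_mem (zxzyz_mem_Hsub ρ θ l hj) (inv_mem (zxyz_mem_Hsub ρ θ l j'))

lemma cElem_mul_mul_inv_mem {s : F3} (hs : s ∈ ({gx, gy, gz} : Set F3)) (p : ℤ × ℤ) :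
    cElem p.1 p.2 * s *
      (cElem (cosetAction ρ θ s⁻¹ p).1 (cosetAction ρ θ s⁻¹ p).2)⁻¹ ∈ Hsub ρ θ := by
  obtain ⟨l, j⟩ := p
  rcases hs with rfl | rfl | rfl
  · rw [map_inv, cosetAction_gx, inv_inv, xMove_apply, cElem, cElem]
    group
    exact one_mem _
  · simpa [cosetAction_gy, yMove_apply] using cElem_mul_gy_mul_inv_mem ρ θ l j
  · rw [map_inv, cosetAction_gz, inv_inv]
    rcases eq_or_ne j 0 with rfl | hj
    · simp [zMove_apply_zero, cElem, zpow_add_one]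
    · simpa [zMove_apply_of_ne_zero ρ θ l hj] using cElem_mul_gz_mul_inv_mem ρ θ l hj

end Hsub

/-- `(l, j) ↦ H·(z^l x^j)` is a bijection from `ℤ²` onto the set of right
cosets of `H` in `F`; in particular `H` has infinite index in `F`.  (The statement for
`H̃ ≤ F̃` is the same statement, for the permutations `ρ̃, θ̃`.) -/
theorem stmt5 (ρ θ : Equiv.Perm Zstar) :
    Function.Bijective
      (fun p : ℤ × ℤ =>
        Quotient.mk (QuotientGroup.rightRel (Hsub ρ θ)) (cElem p.1 p.2)) ∧
    (Hsub ρ θ).index = 0 := by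
  have hbij := (Hsub ρ θ).bijective_rightRel_mk_of_action (cosetAction ρ θ)
    (fun p => cElem p.1 p.2) closure_gx_gy_gz_eq_top (0, 0)
    (fun _ => cosetAction_apply_zero_of_mem ρ θ) (fun p => cosetAction_cElem_inv ρ θ p.1 p.2)
    (by simp [cElem]) (fun _ hs => cElem_mul_mul_inv_mem ρ θ hs)
  refine ⟨hbij, Subgroup.index_eq_zero_iff_infinite.2 ?_⟩
  exact Infinite.of_injective _
    ((QuotientGroup.quotientRightRelEquivQuotientLeftRel _).injective.comp hbij.injective)
end

section
/- Let M, M' ∈ ℤ*, l ∈ ℤ and j ∈ ℤ with M − j, M' − j ∈ ℤ*. If δ(−j, M) = δ(−j, M'), then c_{l,j}^{-1} d_{M,M'}^{-l} c_{l,j} = d_{M−j,M'−j}^{0} in F; in particular x^{-j} d_{M,M'}^{0} x^{j} = d_{M−j,M'−j}^{0}. The analogous statement holds in F̃ with c̃, d̃ and δ̃. -/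
/-- if `δ(-j, M) = δ(-j, M')` then
`c_{l,j}⁻¹ d_{M,M'}^{-l} c_{l,j} = d_{M-j,M'-j}^0`; in particular
`x^{-j} d_{M,M'}^0 x^j = d_{M-j,M'-j}^0`.  (The statement in `F̃` is the same statement,
for the permutation `ρ̃`.) -/
theorem stmt9 (ρ : Equiv.Perm Zstar) (M M' : Zstar) (l j : ℤ)
    (h1 : M.val - j ≠ 0) (h2 : M'.val - j ≠ 0)
    (hδ : (ρ ⟨M.val - j, h1⟩).val - (ρ M).val = (ρ ⟨M'.val - j, h2⟩).val - (ρ M').val) :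
    (cElem l j)⁻¹ * dElem ρ M M' (-l) * cElem l j =
      dElem ρ ⟨M.val - j, h1⟩ ⟨M'.val - j, h2⟩ 0 ∧
    gx ^ (-j) * dElem ρ M M' 0 * gx ^ j =
      dElem ρ ⟨M.val - j, h1⟩ ⟨M'.val - j, h2⟩ 0 := by
  have key : (ρ M').val - (ρ M).val = (ρ ⟨M'.val - j, h2⟩).val - (ρ ⟨M.val - j, h1⟩).val := by omega
  constructor <;>
  · simp only [dElem, vgen, cElem]
    group
    congr 2
    simp only [neg_add_eq_sub]
    rw [key]
end

section
/- Fix permutations θ, θ̃ of ℤ*. For every N > 0 there exist a finite partial bijection ι^{vert} of the index set ℤ* × ℤ × {0,1} and a finite subset X ⊂ ℤ* such that: (i) ι^{vert} is independent from (S_N, S̃_N); (ii) ι^{vert} contains the pair (v_j, ṽ_j) (i.e. the index pair ((j,0,0),(j,0,0))) for every j ∈ X; (iii) for every tuple ω = (ρ, θ, ρ̃, θ̃, ι) in which ι extends ι^{vert}, there exists h ∈ G(ω) such that h^{-1} s h ∈ ⟨{v_j : j ∈ X}⟩ for every s ∈ S_N. -/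
/-!
Put `n = max N 0`. Conjugating by `z^(2n+1)` moves each `s ∈ S_N` to a generator of level
`n+1, …, 3n+1`, outside `S_N`; `ι^{vert}` glues it to `ṽ_k` for a fresh index `k > n`.
Conjugating further by `z̃^(n+1)` gives `ṽ_k^(n+1)`, glued to `v_{-k}^{-(n+1)}`, and a last
conjugation by `z^(n+1)` lands on `v_{-k}`, which `ι^{vert}` fixes. Taking `k` to be `n + 1`
plus an encoding of the raised index in `ℕ` makes all these pairs distinct, so `ι^{vert}` is a
partial bijection; `X` is the set of the indices `-k`.
-/

lemma sElem_conj_zpow_gz (ρ θ : Equiv.Perm Zstar) (q : SIdx) (a : ℤ) :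
    (gz ^ a)⁻¹ * sElem ρ θ q * gz ^ a = sElem ρ θ (q.1, q.2.1 + a, q.2.2) := by
  obtain ⟨j, l, _ | _⟩ := q <;> simp only [sElem, vgen, wgen, if_false, if_true,
    Bool.false_eq_true] <;> group

lemma MonoidHom.conj_sElem {G : Type*} [Group G] (f : F3 →* G) (ρ θ : Equiv.Perm Zstar)
    (q : SIdx) (a : ℤ) :
    (f (gz ^ a))⁻¹ * f (sElem ρ θ q) * f (gz ^ a) = f (sElem ρ θ (q.1, q.2.1 + a, q.2.2)) := by
  rw [← map_inv, ← map_mul, ← map_mul, sElem_conj_zpow_gz]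

lemma ofb_sElem_eq_oft_sElem (ω : OmegaTuple) (q : SIdx) :
    ofb ω (sElem ω.ρ ω.θ q) = oft ω (sElem ω.ρt ω.θt (ω.ι q)) := by
  have h := DFunLike.congr_fun ((Monoid.PushoutI.of_comp_eq_base (φ := pushMaps ω) false).trans
    (Monoid.PushoutI.of_comp_eq_base true).symm) (FreeGroup.of q)
  simp only [pushMaps, sMap, MonoidHom.comp_apply, FreeGroup.lift_apply_of, FreeGroup.map.of,
    if_true, Bool.false_eq_true, if_false] at h
  exact h

lemma InSN.mono {N M : ℤ} {p : SIdx} (hNM : N ≤ M) (hp : InSN N p) : InSN M p := by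
  obtain ⟨⟨h1, h2⟩, h3, h4⟩ := hp
  exact ⟨⟨by omega, by omega⟩, by omega, by omega⟩

lemma setOf_inSN_finite (N : ℤ) : {p : SIdx | InSN N p}.Finite :=
  (((Set.finite_Icc (-N) N).preimage Subtype.val_injective.injOn).prod
    ((Set.finite_Icc (-N) N).prod Set.finite_univ)).subset fun _ hp => ⟨hp.1, hp.2, trivial⟩

instance : Nonempty SIdx := ⟨(⟨1, one_ne_zero⟩, 0, false)⟩

namespace Vertical

variable (n : ℕ)

def freshPos (q : SIdx) : Zstar := ⟨n + 1 + Encodable.encode q, by omega⟩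

def freshNeg (q : SIdx) : Zstar := ⟨-(n + 1 + Encodable.encode q), by omega⟩

def raise (p : SIdx) : SIdx := (p.1, p.2.1 + (2 * n + 1), p.2.2)

def lower (p : SIdx) : SIdx := (freshNeg n (raise n p), -(n + 1), false)

def anchor (p : SIdx) : SIdx := (freshNeg n (raise n p), 0, false)

-- Only the restriction to `vertSource` matters; there the sign of the level tells apart the
-- three pieces `raise`, `lower`, `anchor`.
def vertMap (q : SIdx) : SIdx :=
  if q.2.1 = 0 then q
  else if 0 < q.2.1 then (freshPos n q, 0, false)
  else (⟨-q.1, neg_ne_zero.mpr q.1.2⟩, n + 1, false)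

def vertSource : Set SIdx :=
  raise n '' {p | InSN n p} ∪ lower n '' {p | InSN n p} ∪ anchor n '' {p | InSN n p}

lemma vertMap_raise {p : SIdx} (hp : InSN n p) :
    vertMap n (raise n p) = (freshPos n (raise n p), 0, false) := by
  obtain ⟨-, hl, -⟩ := hp
  rw [vertMap, if_neg (by simp only [raise]; omega), if_pos (by simp only [raise]; omega)]

lemma vertMap_lower (p : SIdx) :
    vertMap n (lower n p) = (freshPos n (raise n p), (n : ℤ) + 1, false) := by
  rw [vertMap, if_neg (by simp only [lower]; omega), if_neg (by simp only [lower]; omega)]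
  simp [lower, freshNeg, freshPos]

lemma vertMap_anchor (p : SIdx) : vertMap n (anchor n p) = anchor n p := by
  simp [vertMap, anchor]

lemma raise_injective : Function.Injective (raise n) := by
  intro p q h
  simp only [raise, Prod.mk.injEq, add_left_inj] at h
  exact Prod.ext h.1 (Prod.ext h.2.1 h.2.2)

lemma vertMap_injOn : Set.InjOn (vertMap n) (vertSource n) := by
  rintro _ ((⟨p, hp, rfl⟩ | ⟨p, hp, rfl⟩) | ⟨p, hp, rfl⟩)
    _ ((⟨q, hq, rfl⟩ | ⟨q, hq, rfl⟩) | ⟨q, hq, rfl⟩) h <;>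
  · simp only [vertMap_raise n hp, vertMap_raise n hq, vertMap_lower, vertMap_anchor] at h
    have h1 := congrArg (fun t : SIdx => t.1.val) h
    have h2 := congrArg (fun t : SIdx => t.2.1) h
    simp only [anchor, freshPos, freshNeg] at h1 h2
    -- in the mixed cases `h1` or `h2` is contradictory
    obtain rfl : p = q := raise_injective n (Encodable.encode_injective (by omega))
    first | rfl | omega

lemma vertSource_finite : (vertSource n).Finite :=
  (((setOf_inSN_finite n).image _).union ((setOf_inSN_finite n).image _)).union
    ((setOf_inSN_finite n).image _)

noncomputable def vertEquiv : PartialEquiv SIdx SIdx :=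
  Set.InjOn.toPartialEquiv (vertMap n) (vertSource n) (vertMap_injOn n)

lemma coe_vertEquiv : ⇑(vertEquiv n) = vertMap n := rfl

lemma vertEquiv_source : (vertEquiv n).source = vertSource n := rfl

lemma vertEquiv_target : (vertEquiv n).target = vertMap n '' vertSource n := rfl

lemma indepFromSN_vertEquiv : IndepFromSN (vertEquiv n) n := by
  rw [IndepFromSN, vertEquiv_source, vertEquiv_target]
  constructor
  · rintro _ ((⟨p, ⟨-, hp⟩, rfl⟩ | ⟨p, -, rfl⟩) | ⟨p, -, rfl⟩) ⟨hj, hl⟩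
    · simp only [raise, Set.mem_Icc] at hp hl; omega
    · simp only [lower, Set.mem_Icc] at hl; omega
    · simp only [anchor, freshNeg, Set.mem_Icc] at hj; omega
  · rintro _ ⟨_, ((⟨p, hp, rfl⟩ | ⟨p, -, rfl⟩) | ⟨p, -, rfl⟩), rfl⟩ ⟨hj, hl⟩
    · simp only [vertMap_raise n hp, freshPos, Set.mem_Icc] at hj; omega
    · simp only [vertMap_lower, Set.mem_Icc] at hl; omega
    · rw [vertMap_anchor] at hj
      simp only [anchor, freshNeg, Set.mem_Icc] at hj; omega

def vertConjugator (ω : OmegaTuple) : GroupOmega ω :=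
  ofb ω (gz ^ (2 * (n : ℤ) + 1)) * oft ω (gz ^ ((n : ℤ) + 1)) * ofb ω (gz ^ ((n : ℤ) + 1))

lemma vertConjugator_conj_sElem (ω : OmegaTuple) (hω : Extends ω.ι (vertEquiv n)) {p : SIdx}
    (hp : InSN n p) :
    (vertConjugator n ω)⁻¹ * ofb ω (sElem ω.ρ ω.θ p) * vertConjugator n ω =
      ofb ω (sElem ω.ρ ω.θ (anchor n p)) := by
  rw [vertConjugator]
  set a := ofb ω (gz ^ (2 * (n : ℤ) + 1))
  set b := oft ω (gz ^ ((n : ℤ) + 1))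
  set c := ofb ω (gz ^ ((n : ℤ) + 1))
  have hraise : ω.ι (raise n p) = (freshPos n (raise n p), 0, false) := by
    rw [hω _ (Or.inl (Or.inl ⟨p, hp, rfl⟩)), coe_vertEquiv, vertMap_raise n hp]
  have hlower : ω.ι (lower n p) = (freshPos n (raise n p), (n : ℤ) + 1, false) := by
    rw [hω _ (Or.inl (Or.inr ⟨p, hp, rfl⟩)), coe_vertEquiv, vertMap_lower]
  have step1 : a⁻¹ * ofb ω (sElem ω.ρ ω.θ p) * a =
      oft ω (sElem ω.ρt ω.θt (freshPos n (raise n p), 0, false)) := by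
    rw [MonoidHom.conj_sElem, ← hraise]
    exact ofb_sElem_eq_oft_sElem ω (raise n p)
  have step2 : b⁻¹ * oft ω (sElem ω.ρt ω.θt (freshPos n (raise n p), 0, false)) * b =
      ofb ω (sElem ω.ρ ω.θ (lower n p)) := by
    rw [MonoidHom.conj_sElem, ofb_sElem_eq_oft_sElem, hlower, zero_add]
  have step3 :
      c⁻¹ * ofb ω (sElem ω.ρ ω.θ (lower n p)) * c = ofb ω (sElem ω.ρ ω.θ (anchor n p)) := by
    rw [MonoidHom.conj_sElem]
    simp only [lower, anchor, neg_add_cancel]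
  calc (a * b * c)⁻¹ * ofb ω (sElem ω.ρ ω.θ p) * (a * b * c)
      = c⁻¹ * (b⁻¹ * (a⁻¹ * ofb ω (sElem ω.ρ ω.θ p) * a) * b) * c := by group
    _ = ofb ω (sElem ω.ρ ω.θ (anchor n p)) := by rw [step1, step2, step3]

end Vertical

open Vertical in
theorem exists_vertical_natCast (n : ℕ) :
    ∃ (ιv : PartialEquiv SIdx SIdx) (X : Finset Zstar),
      ιv.source.Finite ∧
      IndepFromSN ιv n ∧
      (∀ jx ∈ X, ((jx, (0 : ℤ), false) : SIdx) ∈ ιv.source ∧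
        ιv (jx, (0 : ℤ), false) = (jx, (0 : ℤ), false)) ∧
      ∀ ω : OmegaTuple, Extends ω.ι ιv →
        ∃ h : GroupOmega ω, ∀ p : SIdx, InSN n p →
          h⁻¹ * ofb ω (sElem ω.ρ ω.θ p) * h ∈
            Subgroup.closure ((fun jx : Zstar => ofb ω (vgen ω.ρ jx 0)) '' (X : Set Zstar)) := by
  refine ⟨vertEquiv n, (setOf_inSN_finite n).toFinset.image fun p => freshNeg n (raise n p),
    vertSource_finite n, indepFromSN_vertEquiv n, ?_,
    fun ω hω => ⟨vertConjugator n ω, fun p hp => ?_⟩⟩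
  · simp only [Finset.mem_image, Set.Finite.mem_toFinset]
    rintro _ ⟨p, hp, rfl⟩
    exact ⟨Or.inr ⟨p, hp, rfl⟩, vertMap_anchor n p⟩
  · rw [vertConjugator_conj_sElem n ω hω hp]
    refine Subgroup.subset_closure ⟨_, ?_, rfl⟩
    exact Finset.mem_image.mpr ⟨p, (Set.Finite.mem_toFinset _).mpr hp, rfl⟩

theorem stmt13_general (θ θt : Equiv.Perm Zstar) (N : ℤ) :
    ∃ (ιv : PartialEquiv SIdx SIdx) (X : Finset Zstar),
      ιv.source.Finite ∧
      IndepFromSN ιv N ∧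
      (∀ jx ∈ X, ((jx, (0 : ℤ), false) : SIdx) ∈ ιv.source ∧
        ιv (jx, (0 : ℤ), false) = (jx, (0 : ℤ), false)) ∧
      ∀ ω : OmegaTuple, ω.θ = θ → ω.θt = θt → Extends ω.ι ιv →
        ∃ h : GroupOmega ω, ∀ p : SIdx, InSN N p →
          h⁻¹ * ofb ω (sElem ω.ρ ω.θ p) * h ∈
            Subgroup.closure ((fun jx : Zstar => ofb ω (vgen ω.ρ jx 0)) '' (X : Set Zstar)) := by
  obtain ⟨ιv, X, hfin, ⟨hsrc, htgt⟩, hX, hconj⟩ := exists_vertical_natCast N.toNat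
  have hmono {p : SIdx} : InSN N p → InSN N.toNat p := InSN.mono (Int.self_le_toNat N)
  refine ⟨ιv, X, hfin, ⟨fun p hp => mt hmono (hsrc p hp), fun p hp => mt hmono (htgt p hp)⟩, hX,
    fun ω _ _ hω => ?_⟩
  obtain ⟨h, hh⟩ := hconj ω hω
  exact ⟨h, fun p hp => hh p (hmono hp)⟩

/-- Lemma "vertical": for any `θ, θ̃` and any `N > 0` there are a finite
partial bijection `ι^{vert}` of the index set, independent from `(S_N, S̃_N)`, and a finite
`X ⊂ ℤ*` with `(v_j, ṽ_j) ∈ ι^{vert}` for all `j ∈ X`, such that for every tuple `ω` whose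
`ι` extends `ι^{vert}` there is `h ∈ G(ω)` conjugating every element of `S_N` into
`⟨{v_j : j ∈ X}⟩`. -/
theorem stmt13 (θ θt : Equiv.Perm Zstar) (N : ℤ) (hN : 0 < N) :
    ∃ (ιv : PartialEquiv SIdx SIdx) (X : Finset Zstar),
      ιv.source.Finite ∧
      IndepFromSN ιv N ∧
      (∀ jx ∈ X, ((jx, (0 : ℤ), false) : SIdx) ∈ ιv.source ∧
        ιv (jx, (0 : ℤ), false) = (jx, (0 : ℤ), false)) ∧
      ∀ ω : OmegaTuple, ω.θ = θ → ω.θt = θt → Extends ω.ι ιv →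
        ∃ h : GroupOmega ω, ∀ p : SIdx, InSN N p →
          h⁻¹ * ofb ω (sElem ω.ρ ω.θ p) * h ∈
            Subgroup.closure ((fun jx : Zstar => ofb ω (vgen ω.ρ jx 0)) '' (X : Set Zstar)) :=
  stmt13_general θ θt N
end
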